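/- arXiv:2304.06347 — 2 statements merged into one kernel-verified Lean document; each statement's English description precedes it below -/
import Mathlib

section
/- Let n ≥ 1 and let m_1, …, m_n be integers with m_i ≥ 2 for all i. If det T(m_1, …, m_n) = det T(m_2, …, m_n) + 1, then m_i = 2 for all i and det T(m_1, …, m_n) = n + 1. (This is Lemma 3.3(5): if Δ(Γ) = Δ(Γ∖{v_1}) + 1, then Δ(Γ) = n + 1.) -/
/-!
Expanding along the first row gives `Δ(m₁, …, mₙ) = m₁ Δ(m₂, …, mₙ) - Δ(m₃, …, mₙ)`, i.e.
`Δ(m₁, …, mₙ) - Δ(m₂, …, mₙ) = (m₁ - 2) Δ(m₂, …, mₙ) + (Δ(m₂, …, mₙ) - Δ(m₃, …, mₙ))`.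
When all `mᵢ ≥ 2`, induction shows every such gap is at least `1` and every `Δ` is positive, so a
gap of exactly `1` forces `m₁ = 2` and a gap of `1` one step further along; hence all `mᵢ = 2`,
and the chain of `(-2)`-curves has `Δ = n + 1`.
-/

/-- The determinant of the `n × n` tridiagonal integer matrix whose diagonal
entries are `m 1, …, m n` (so the `(i,i)` entry, `i : Fin n`, is `m (i+1)`),
whose entries immediately above and below the diagonal are all `-1`, and whose
other entries are `0`.  For `n = 0` this is `1` (determinant of the empty matrix). -/
def tridiagDet (n : ℕ) (m : ℕ → ℤ) : ℤ :=
  Matrix.det (fun i j : Fin n =>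
    if (i : ℕ) = (j : ℕ) then m ((i : ℕ) + 1)
    else if (i : ℕ) + 1 = (j : ℕ) ∨ (j : ℕ) + 1 = (i : ℕ) then -1 else 0)

def tridiagMatrix (n : ℕ) (m : ℕ → ℤ) : Matrix (Fin n) (Fin n) ℤ := fun i j =>
  if (i : ℕ) = (j : ℕ) then m ((i : ℕ) + 1)
  else if (i : ℕ) + 1 = (j : ℕ) ∨ (j : ℕ) + 1 = (i : ℕ) then -1 else 0

theorem tridiagDet_eq_det (n : ℕ) (m : ℕ → ℤ) : tridiagDet n m = (tridiagMatrix n m).det := rfl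

theorem tridiagDet_zero (m : ℕ → ℤ) : tridiagDet 0 m = 1 := Matrix.det_isEmpty

theorem tridiagDet_one (m : ℕ → ℤ) : tridiagDet 1 m = m 1 := by
  simp [tridiagDet_eq_det, tridiagMatrix]

theorem tridiagMatrix_submatrix_succ (k : ℕ) (m : ℕ → ℤ) :
    (tridiagMatrix (k + 1) m).submatrix Fin.succ Fin.succ =
      tridiagMatrix k (fun i => m (1 + i)) := by
  ext i j
  simp only [tridiagMatrix, Matrix.submatrix_apply, Fin.val_succ]
  split_ifs <;> first | rfl | omega | (congr 1; omega)

theorem tridiagDet_add_two (k : ℕ) (m : ℕ → ℤ) :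
    tridiagDet (k + 2) m =
      m 1 * tridiagDet (k + 1) (fun i => m (1 + i)) - tridiagDet k (fun i => m (1 + (1 + i))) := by
  -- the minor of the `(0, 1)` entry has `-1` as the only nonzero entry of its first column
  have hminor : ((tridiagMatrix (k + 2) m).submatrix Fin.succ (Fin.succAbove 1)).det =
      -tridiagDet k (fun i => m (1 + (1 + i))) := by
    rw [Matrix.det_succ_column_zero, Fin.sum_univ_succ,
      Finset.sum_eq_zero (fun i _ => by simp [tridiagMatrix]), Fin.succAbove_zero,
      Matrix.submatrix_submatrix]
    have hcols : (Fin.succAbove (1 : Fin (k + 2))) ∘ Fin.succ = Fin.succ ∘ Fin.succ := by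
      ext; simp [Fin.succAbove, Fin.lt_def]
    rw [hcols, ← Matrix.submatrix_submatrix, tridiagMatrix_submatrix_succ,
      tridiagMatrix_submatrix_succ]
    simp [tridiagMatrix, tridiagDet_eq_det]
  rw [tridiagDet_eq_det, Matrix.det_succ_row_zero, Fin.sum_univ_succ, Fin.sum_univ_succ,
    Finset.sum_eq_zero (fun j _ => by simp [tridiagMatrix]), Fin.succ_zero_eq_one, hminor,
    Fin.succAbove_zero, tridiagMatrix_submatrix_succ]
  simp [tridiagMatrix, tridiagDet_eq_det, sub_eq_add_neg]

theorem tridiagDet_of_forall_eq_two :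
    ∀ (k : ℕ) (m : ℕ → ℤ), (∀ i, 1 ≤ i → i ≤ k → m i = 2) → tridiagDet k m = k + 1
  | 0, m, _ => by simp [tridiagDet_zero]
  | 1, m, hm => by simp [tridiagDet_one, hm 1 le_rfl le_rfl]
  | k + 2, m, hm => by
    rw [tridiagDet_add_two, hm 1 le_rfl (by omega),
      tridiagDet_of_forall_eq_two (k + 1) _ (fun i hi hik => hm _ (by omega) (by omega)),
      tridiagDet_of_forall_eq_two k _ (fun i hi hik => hm _ (by omega) (by omega))]
    push_cast
    ring

theorem tridiagDet_pos_and_lt_succ (k : ℕ) (m : ℕ → ℤ)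
    (hm : ∀ i, 1 ≤ i → i ≤ k + 1 → 2 ≤ m i) :
    0 < tridiagDet k (fun i => m (1 + i)) ∧
      tridiagDet k (fun i => m (1 + i)) < tridiagDet (k + 1) m := by
  induction k generalizing m with
  | zero =>
    rw [tridiagDet_zero, tridiagDet_one]
    have := hm 1 le_rfl le_rfl
    omega
  | succ k ih =>
    obtain ⟨hpos, hlt⟩ := ih (fun i => m (1 + i)) (fun i hi hik => hm _ (by omega) (by omega))
    have hm1 := hm 1 le_rfl (by omega)
    rw [tridiagDet_add_two]
    constructor <;> nlinarith

theorem forall_eq_two_of_tridiagDet_eq_add_one (k : ℕ) (m : ℕ → ℤ)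
    (hm : ∀ i, 1 ≤ i → i ≤ k + 1 → 2 ≤ m i)
    (h : tridiagDet (k + 1) m = tridiagDet k (fun i => m (1 + i)) + 1) :
    ∀ i, 1 ≤ i → i ≤ k + 1 → m i = 2 := by
  induction k generalizing m with
  | zero =>
    rw [tridiagDet_one, tridiagDet_zero] at h
    intro i hi hik
    obtain rfl : i = 1 := by omega
    omega
  | succ k ih =>
    have hm' : ∀ i, 1 ≤ i → i ≤ k + 1 → 2 ≤ m (1 + i) :=
      fun i hi hik => hm _ (by omega) (by omega)
    obtain ⟨hpos, hlt⟩ := tridiagDet_pos_and_lt_succ k _ hm'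
    have hm1 := hm 1 le_rfl (by omega)
    rw [tridiagDet_add_two] at h
    have hgap : (m 1 - 2) * tridiagDet (k + 1) (fun i => m (1 + i)) = 0 := by nlinarith
    have hm1_eq : m 1 = 2 := by rcases mul_eq_zero.1 hgap with h' | h' <;> omega
    have hrest := ih _ hm' (by rw [hm1_eq] at h; linarith)
    intro i hi hik
    rcases hi.eq_or_lt with rfl | hi
    · exact hm1_eq
    · simpa [show 1 + (i - 1) = i by omega] using hrest (i - 1) (by omega) (by omega)

theorem tridiagDet_succ_eq_general (n : ℕ) (m : ℕ → ℤ)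
    (hm : ∀ i, 1 ≤ i → i ≤ n → 2 ≤ m i)
    (h : tridiagDet n m = tridiagDet (n - 1) (fun i => m (1 + i)) + 1) :
    (∀ i, 1 ≤ i → i ≤ n → m i = 2) ∧ tridiagDet n m = (n : ℤ) + 1 := by
  cases n with
  | zero => simp [tridiagDet_zero] at h
  | succ k =>
    have hall := forall_eq_two_of_tridiagDet_eq_add_one k m hm h
    exact ⟨hall, tridiagDet_of_forall_eq_two _ m hall⟩

/-- Lemma 3.3(5): for a chain with weights `m_1, …, m_n`, each `m_i ≥ 2`,
if `det T(m_1, …, m_n) = det T(m_2, …, m_n) + 1` (i.e. `Δ(Γ) = Δ(Γ∖{v_1}) + 1`),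
then all `m_i = 2` and `det T(m_1, …, m_n) = n + 1`. -/
theorem tridiagDet_succ_eq (n : ℕ) (hn : 1 ≤ n) (m : ℕ → ℤ)
    (hm : ∀ i, 1 ≤ i → i ≤ n → 2 ≤ m i)
    (h : tridiagDet n m = tridiagDet (n - 1) (fun i => m (1 + i)) + 1) :
    (∀ i, 1 ≤ i → i ≤ n → m i = 2) ∧ tridiagDet n m = (n : ℤ) + 1 :=
  tridiagDet_succ_eq_general n m hm h
end

section
/- Let n ≥ 1 and let m_1, …, m_n be integers with m_i ≥ 2 for all i. If m_{i_0} ≥ 3 for some index i_0 with 1 ≤ i_0 ≤ n, then det T(m_1, …, m_n) > (i_0 + 1) · det T(m_{i_0+1}, …, m_n). (This is Lemma 3.3(6): Δ(Γ) > (i_0+1)·Δ(Γ∖\overline{v_1v_{i_0}}).) -/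
def tridiag (n : ℕ) (m : ℕ → ℤ) : Matrix (Fin n) (Fin n) ℤ :=
  Matrix.of fun i j =>
    if (i : ℕ) = (j : ℕ) then m ((i : ℕ) + 1)
    else if (i : ℕ) + 1 = (j : ℕ) ∨ (j : ℕ) + 1 = (i : ℕ) then -1 else 0

theorem tridiagDet_eq_det_tridiag (n : ℕ) (m : ℕ → ℤ) :
    tridiagDet n m = (tridiag n m).det := rfl

theorem tridiag_submatrix_succ_succ (n : ℕ) (m : ℕ → ℤ) :
    (tridiag (n + 1) m).submatrix Fin.succ Fin.succ = tridiag n (fun i => m (i + 1)) := by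
  ext i j
  simp [tridiag]

theorem det_tridiag_submatrix_succ_succAbove_one (n : ℕ) (m : ℕ → ℤ) :
    ((tridiag (n + 2) m).submatrix Fin.succ (Fin.succ 0).succAbove).det
      = - tridiagDet n (fun i => m (i + 2)) := by
  have hminor : (tridiag (n + 2) m).submatrix (Fin.succ ∘ Fin.succ)
      ((Fin.succ 0).succAbove ∘ Fin.succ) = tridiag n (fun i => m (i + 2)) := by
    ext i j; simp [tridiag, Fin.succAbove]
  rw [Matrix.det_succ_column_zero, Fin.sum_univ_succ, Matrix.submatrix_submatrix,
    Fin.succAbove_zero, hminor]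
  simp [tridiag, tridiagDet_eq_det_tridiag, Fin.succAbove]

theorem tridiagDet_succ_succ (n : ℕ) (m : ℕ → ℤ) :
    tridiagDet (n + 2) m
      = m 1 * tridiagDet (n + 1) (fun i => m (i + 1)) - tridiagDet n (fun i => m (i + 2)) := by
  rw [tridiagDet_eq_det_tridiag, Matrix.det_succ_row_zero, Fin.sum_univ_succ, Fin.sum_univ_succ,
    det_tridiag_submatrix_succ_succAbove_one, Fin.succAbove_zero, tridiag_submatrix_succ_succ,
    ← tridiagDet_eq_det_tridiag]
  simp [tridiag, sub_eq_add_neg]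

theorem tridiagDet_succ_succ_sub_tail (n : ℕ) (m : ℕ → ℤ) :
    tridiagDet (n + 2) m - tridiagDet (n + 1) (fun i => m (i + 1))
      = (m 1 - 2) * tridiagDet (n + 1) (fun i => m (i + 1))
        + (tridiagDet (n + 1) (fun i => m (i + 1)) - tridiagDet n (fun i => m (i + 2))) := by
  rw [tridiagDet_succ_succ]; ring

theorem tridiagDet_pos_and_tail_lt (n : ℕ) (m : ℕ → ℤ) (hm : ∀ i, 1 ≤ i → i ≤ n + 1 → 2 ≤ m i) :
    0 < tridiagDet n (fun i => m (i + 1)) ∧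
      tridiagDet n (fun i => m (i + 1)) < tridiagDet (n + 1) m := by
  induction n generalizing m with
  | zero =>
    rw [tridiagDet_zero, tridiagDet_one]
    exact ⟨one_pos, hm 1 le_rfl le_rfl⟩
  | succ n ih =>
    obtain ⟨hpos, hlt⟩ := ih (fun i => m (i + 1)) fun i hi hin => hm (i + 1) (by omega) (by omega)
    have hgap := tridiagDet_succ_succ_sub_tail n m
    have hm1 := hm 1 le_rfl (by omega)
    constructor <;> nlinarith

theorem tridiagDet_tail_add_one_le_sub_tail (n : ℕ) (m : ℕ → ℤ)
    (hm : ∀ i, 1 ≤ i → i ≤ n + 1 → 2 ≤ m i) (hm1 : 3 ≤ m 1) :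
    tridiagDet n (fun i => m (i + 1)) + 1
      ≤ tridiagDet (n + 1) m - tridiagDet n (fun i => m (i + 1)) := by
  cases n with
  | zero => rw [tridiagDet_zero, tridiagDet_one]; omega
  | succ n =>
    obtain ⟨hpos, hlt⟩ := tridiagDet_pos_and_tail_lt n (fun i => m (i + 1))
      fun i hi hin => hm (i + 1) (by omega) (by omega)
    have hgap := tridiagDet_succ_succ_sub_tail n m
    nlinarith

theorem tridiagDet_ge_of_three_le (i j : ℕ) (m : ℕ → ℤ)
    (hm : ∀ k, 1 ≤ k → k ≤ i + 1 + j → 2 ≤ m k) (hmi : 3 ≤ m (i + 1)) :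
    tridiagDet j (fun k => m (i + 1 + k)) + 1
        ≤ tridiagDet (i + 1 + j) m - tridiagDet (i + j) (fun k => m (k + 1)) ∧
      (i + 2) * tridiagDet j (fun k => m (i + 1 + k)) + (i + 1) ≤ tridiagDet (i + 1 + j) m := by
  induction i generalizing m with
  | zero =>
    simp only [zero_add, add_comm 1 _] at hm hmi ⊢
    have h := tridiagDet_tail_add_one_le_sub_tail j m hm hmi
    push_cast
    constructor <;> linarith
  | succ i ih =>
    obtain ⟨hgap, hbound⟩ := ih (fun k => m (k + 1))
      (fun k hk hkn => hm (k + 1) (by omega) (by omega)) hmi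
    have htail : (fun k => m (i + 1 + k + 1)) = fun k => m (i + 1 + 1 + k) := by
      funext k; congr 1; omega
    simp only [htail] at hgap hbound
    have hrec := tridiagDet_succ_succ_sub_tail (i + j) m
    obtain ⟨hpos, -⟩ := tridiagDet_pos_and_tail_lt (i + j + 1) m
      fun k hk hkn => hm k hk (by omega)
    rw [show i + 1 + 1 + j = i + j + 2 by omega, show i + 1 + j = i + j + 1 by omega]
    rw [show i + 1 + j = i + j + 1 by omega] at hgap hbound
    have hm1 := hm 1 le_rfl (by omega)
    push_cast
    constructor <;> nlinarith

theorem tridiagDet_gt_of_weight_ge_three_general (n : ℕ) (m : ℕ → ℤ)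
    (hm : ∀ i, 1 ≤ i → i ≤ n → 2 ≤ m i)
    (i₀ : ℕ) (hi₀1 : 1 ≤ i₀) (hi₀n : i₀ ≤ n) (hm3 : 3 ≤ m i₀) :
    tridiagDet n m > ((i₀ : ℤ) + 1) * tridiagDet (n - i₀) (fun i => m (i₀ + i)) := by
  obtain ⟨i, rfl⟩ : ∃ i, i₀ = i + 1 := ⟨i₀ - 1, by omega⟩
  obtain ⟨j, rfl⟩ : ∃ j, n = i + 1 + j := ⟨n - (i + 1), by omega⟩
  have hbound := (tridiagDet_ge_of_three_le i j m hm hm3).2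
  rw [Nat.add_sub_cancel_left]
  push_cast
  linarith

/-- Lemma 3.3(6): for a chain with weights `m_1, …, m_n`, each `m_i ≥ 2`,
if `m_{i_0} ≥ 3` for some `1 ≤ i_0 ≤ n`, then
`det T(m_1, …, m_n) > (i_0 + 1) · det T(m_{i_0+1}, …, m_n)`. -/
theorem tridiagDet_gt_of_weight_ge_three (n : ℕ) (hn : 1 ≤ n) (m : ℕ → ℤ)
    (hm : ∀ i, 1 ≤ i → i ≤ n → 2 ≤ m i)
    (i₀ : ℕ) (hi₀1 : 1 ≤ i₀) (hi₀n : i₀ ≤ n) (hm3 : 3 ≤ m i₀) :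
    tridiagDet n m > ((i₀ : ℤ) + 1) * tridiagDet (n - i₀) (fun i => m (i₀ + i)) :=
  tridiagDet_gt_of_weight_ge_three_general n m hm i₀ hi₀1 hi₀n hm3
end
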